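/- arXiv:2605.27550 — 3 statements merged into one kernel-verified Lean document; each statement's English description precedes it below -/
import Mathlib

section
/- Let F : [a,b] → ℝ be continuously differentiable with b > a. Then sup_{t∈[a,b]} |F(t)|^2 ≤ C [ (∫_a^b |F(s)|^2 ds)^{1/2} (∫_a^b |F'(s)|^2 ds)^{1/2} + ∫_a^b |F(s)|^2 ds ], with C depending only on b - a. -/
open MeasureTheory Set

/-- Multiplicative one-dimensional Sobolev bound: for `F ∈ C¹([a,b])`,
`sup |F|² ≤ C (‖F‖₂ ‖F'‖₂ + ‖F‖₂²)` on `[a,b]`, with `C` depending only on `b - a`. -/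
theorem stmt5 :
    ∀ L : ℝ, 0 < L → ∃ C : ℝ, 0 < C ∧
      ∀ (a b : ℝ), b - a = L →
        ∀ (F F' : ℝ → ℝ),
          (∀ t ∈ Icc a b, HasDerivWithinAt F (F' t) (Icc a b) t) →
          ContinuousOn F' (Icc a b) →
          ∀ t ∈ Icc a b,
            |F t| ^ 2 ≤ C * ((∫ s in Icc a b, (F s) ^ 2) ^ (1/2 : ℝ) *
                (∫ s in Icc a b, (F' s) ^ 2) ^ (1/2 : ℝ) +
              ∫ s in Icc a b, (F s) ^ 2) := by
  intro L hL
  refine ⟨2 + 1/L, by positivity, ?_⟩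
  intro a b hab F F' hF hF' t ht
  have hab' : a ≤ b := by nlinarith
  have hFc : ContinuousOn F (Icc a b) := fun x hx => (hF x hx).continuousWithinAt
  have hmeas : MeasurableSet (Icc a b) := measurableSet_Icc
  have hF2c : ContinuousOn (fun x => F x ^ 2) (Icc a b) := hFc.pow 2
  have hF2int : IntegrableOn (fun s => F s ^ 2) (Icc a b) :=
    hF2c.integrableOn_compact isCompact_Icc
  have hF'2int : IntegrableOn (fun s => F' s ^ 2) (Icc a b) :=
    (hF'.pow 2).integrableOn_compact isCompact_Icc
  -- min point of F²
  obtain ⟨s₀, hs₀I, hs₀⟩ :=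
    isCompact_Icc.exists_isMinOn (nonempty_Icc.2 hab') hF2c
  have hvol : (volume (Icc a b)).toReal = L := by
    rw [Real.volume_Icc, ENNReal.toReal_ofReal (by linarith)]
    exact hab
  have hmin : F s₀ ^ 2 * L ≤ ∫ s in Icc a b, F s ^ 2 := by
    have h1 : ∫ _ in Icc a b, (F s₀ ^ 2) ≤ ∫ s in Icc a b, F s ^ 2 :=
      setIntegral_mono_on (integrableOn_const (by
        simp [Real.volume_Icc])) hF2int hmeas (fun x hx => hs₀ hx)
    rwa [setIntegral_const, smul_eq_mul, measureReal_def, hvol, mul_comm] at h1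
  -- FTC : F t ^ 2 = F s₀ ^ 2 + ∫ s₀..t, 2 F F'
  set g : ℝ → ℝ := fun x => 2 * F x * F' x with hg
  have hgc : ContinuousOn g (Icc a b) := by
    exact (continuousOn_const.mul hFc).mul hF'
  have hgint : IntegrableOn g (Icc a b) := hgc.integrableOn_compact isCompact_Icc
  have hsub : uIcc s₀ t ⊆ Icc a b := uIcc_subset_Icc hs₀I ht
  have hftc : ∫ x in s₀..t, g x = F t ^ 2 - F s₀ ^ 2 := by
    apply intervalIntegral.integral_eq_sub_of_hasDeriv_right
    · exact hF2c.mono hsub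
    · intro x hx
      have hxI : x ∈ Ioo a b := by
        rcases hx with ⟨h1, h2⟩
        constructor
        · exact lt_of_le_of_lt (le_min hs₀I.1 ht.1) h1
        · exact lt_of_lt_of_le h2 (max_le hs₀I.2 ht.2)
      have hd : HasDerivAt (fun x => F x ^ 2) (g x) x := by
        have := (hF x (Ioo_subset_Icc_self hxI)).fun_pow 2
        have h' := this.hasDerivAt (Icc_mem_nhds hxI.1 hxI.2)
        rw [show g x = ((2:ℕ):ℝ) * F x ^ (2 - 1) * F' x by show 2 * F x * F' x = _; norm_num]
        exact h'
      exact hd.hasDerivWithinAt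
    · exact (hgint.mono_set hsub).intervalIntegrable
  -- bound the interval integral by ∫ |g| over Icc a b
  have habs : F t ^ 2 - F s₀ ^ 2 ≤ ∫ s in Icc a b, |g s| := by
    rw [← hftc]
    calc ∫ x in s₀..t, g x ≤ ‖∫ x in s₀..t, g x‖ := le_abs_self _
      _ ≤ ∫ x in Set.uIoc s₀ t, ‖g x‖ := intervalIntegral.norm_integral_le_integral_norm_uIoc
      _ ≤ ∫ s in Icc a b, |g s| := by
          apply setIntegral_mono_set (hgint.abs)
          · exact Filter.Eventually.of_forall fun x => abs_nonneg _
          · exact HasSubset.Subset.eventuallyLE (Set.uIoc_subset_uIcc.trans hsub)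
  -- Cauchy-Schwarz
  haveI : IsFiniteMeasure (volume.restrict (Icc a b)) := by
    constructor
    rw [Measure.restrict_apply_univ, Real.volume_Icc]
    exact ENNReal.ofReal_lt_top
  obtain ⟨M, hM⟩ := isCompact_Icc.exists_bound_of_continuousOn hFc
  obtain ⟨M', hM'⟩ := isCompact_Icc.exists_bound_of_continuousOn hF'
  have hFm : MemLp (fun s => |F s|) (ENNReal.ofReal 2) (volume.restrict (Icc a b)) := by
    apply MemLp.of_bound ((hFc.abs).aestronglyMeasurable hmeas) M
    rw [ae_restrict_iff' hmeas]
    exact Filter.Eventually.of_forall fun x hx => by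
      simpa [Real.norm_eq_abs, abs_abs] using hM x hx
  have hF'm : MemLp (fun s => |F' s|) (ENNReal.ofReal 2) (volume.restrict (Icc a b)) := by
    apply MemLp.of_bound ((hF'.abs).aestronglyMeasurable hmeas) M'
    rw [ae_restrict_iff' hmeas]
    exact Filter.Eventually.of_forall fun x hx => by
      simpa [Real.norm_eq_abs, abs_abs] using hM' x hx
  have hpq : (2 : ℝ).HolderConjugate 2 := by
    rw [Real.holderConjugate_iff_eq_conjExponent (by norm_num)]
    norm_num
  have hCS : ∫ s in Icc a b, |F s| * |F' s| ≤
      (∫ s in Icc a b, F s ^ 2) ^ (1/2 : ℝ) * (∫ s in Icc a b, F' s ^ 2) ^ (1/2 : ℝ) := by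
    have h := integral_mul_le_Lp_mul_Lq_of_nonneg hpq
      (Filter.Eventually.of_forall fun x => abs_nonneg (F x))
      (Filter.Eventually.of_forall fun x => abs_nonneg (F' x)) hFm hF'm
    have e : ∀ u : ℝ, |u| ^ (2 : ℝ) = u ^ 2 := fun u => by
      rw [show (2:ℝ) = ((2:ℕ):ℝ) by norm_num, Real.rpow_natCast, sq_abs]
    simp_rw [e] at h
    exact h
  -- combine
  have hgabs : ∫ s in Icc a b, |g s| = 2 * ∫ s in Icc a b, |F s| * |F' s| := by
    rw [← integral_const_mul]
    congr 1
    funext s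
    rw [hg]
    rw [abs_mul, abs_mul, abs_two, mul_assoc]
  have hintnn : 0 ≤ ∫ s in Icc a b, F s ^ 2 :=
    setIntegral_nonneg hmeas fun x _ => sq_nonneg _
  have hX : (0:ℝ) ≤ (∫ s in Icc a b, F s ^ 2) ^ (1/2 : ℝ) := Real.rpow_nonneg hintnn _
  have hY : (0:ℝ) ≤ (∫ s in Icc a b, F' s ^ 2) ^ (1/2 : ℝ) :=
    Real.rpow_nonneg (setIntegral_nonneg hmeas fun x _ => sq_nonneg _) _
  have hfinal : F t ^ 2 ≤ (∫ s in Icc a b, F s ^ 2) / L +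
      2 * ((∫ s in Icc a b, F s ^ 2) ^ (1/2 : ℝ) * (∫ s in Icc a b, F' s ^ 2) ^ (1/2 : ℝ)) := by
    have h1 : F s₀ ^ 2 ≤ (∫ s in Icc a b, F s ^ 2) / L := by
      rw [le_div_iff₀ hL]; exact hmin
    nlinarith [hCS, habs, hgabs]
  rw [sq_abs]
  have hexp : (2 + 1/L) * ((∫ s in Icc a b, F s ^ 2) ^ (1/2 : ℝ) *
      (∫ s in Icc a b, F' s ^ 2) ^ (1/2 : ℝ) + ∫ s in Icc a b, F s ^ 2) =
      2 * ((∫ s in Icc a b, F s ^ 2) ^ (1/2 : ℝ) * (∫ s in Icc a b, F' s ^ 2) ^ (1/2 : ℝ))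
      + 2 * (∫ s in Icc a b, F s ^ 2)
      + (1/L) * ((∫ s in Icc a b, F s ^ 2) ^ (1/2 : ℝ) * (∫ s in Icc a b, F' s ^ 2) ^ (1/2 : ℝ))
      + (∫ s in Icc a b, F s ^ 2) / L := by ring
  have hLinv : (0:ℝ) ≤ 1/L := by positivity
  have h2 := mul_nonneg hLinv (mul_nonneg hX hY)
  linarith
end

section
/- There exists a compact set F ⊂ [0,1] (a fat Cantor set) with positive one-dimensional Lebesgue measure and empty interior such that, setting E = F × {0} ⊂ ℝ², the union U = ⋃_{x∈E} {y ∈ ℝ² : |y - x| = 1} has positive two-dimensional Lebesgue measure but empty interior. -/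
/-!
Remove from `[0, 1]` an open set of measure at most `1/2` containing the rationals: what is left
is a compact set `F` of positive measure with empty interior. The horizontal slice at height `y`
of the union of unit circles centred on `F × {0}` is `(F + c) ∪ (F - c)` with `c = √(1 - y²)`.
Each slice with `|y| ≤ 1` thus has measure at least `|F|`, which by Tonelli gives positive area,
and is a union of two closed sets with empty interior, so no open ball fits in the union.
-/

open MeasureTheory Set

open scoped Pointwise

theorem exists_isCompact_subset_Icc_volume_pos_interior_eq_empty :
    ∃ F ⊆ Icc (0 : ℝ) 1, IsCompact F ∧ 0 < volume F ∧ interior F = ∅ := by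
  obtain ⟨U, hQU, hU, hUvol⟩ :=
    (range ((↑) : ℚ → ℝ)).exists_isOpen_le_add volume (ε := 2⁻¹) (by norm_num)
  rw [(countable_range _).measure_zero, zero_add] at hUvol
  refine ⟨Icc 0 1 \ U, sdiff_subset, isCompact_Icc.diff hU, ?_, ?_⟩
  · calc (0 : ENNReal) < 1 - 2⁻¹ := by norm_num
      _ ≤ volume (Icc (0 : ℝ) 1) - volume U := by
        rw [Real.volume_Icc, sub_zero, ENNReal.ofReal_one]; gcongr
      _ ≤ volume (Icc 0 1 \ U) := le_measure_sdiff
  · have hUdense : Dense U := Rat.denseRange_cast.mono hQU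
    exact subset_eq_empty (interior_mono (sdiff_subset_compl _ _))
      (by rw [interior_compl, hUdense.closure_eq, compl_univ])

theorem MeasureTheory.Measure.lintegral_measure_preimage_prodMk_le_prod {α β : Type*}
    [MeasurableSpace α] [MeasurableSpace β] (μ : Measure α) (ν : Measure β) [SFinite μ]
    [SFinite ν] (s : Set (α × β)) :
    ∫⁻ y, μ ((fun x => (x, y)) ⁻¹' s) ∂ν ≤ μ.prod ν s :=
  calc ∫⁻ y, μ ((fun x => (x, y)) ⁻¹' s) ∂ν
      ≤ ∫⁻ y, μ ((fun x => (x, y)) ⁻¹' toMeasurable (μ.prod ν) s) ∂ν :=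
        lintegral_mono fun _ => measure_mono (preimage_mono (subset_toMeasurable _ _))
    _ = μ.prod ν s := by
        rw [← Measure.prod_apply_symm (measurableSet_toMeasurable _ _), measure_toMeasurable]

def unitCircleUnion (F : Set ℝ) : Set (ℝ × ℝ) := {y | ∃ t ∈ F, (y.1 - t) ^ 2 + y.2 ^ 2 = 1}

variable {F : Set ℝ}

theorem sq_le_one_of_mem_unitCircleUnion {p : ℝ × ℝ} (hp : p ∈ unitCircleUnion F) :
    p.2 ^ 2 ≤ 1 := by
  obtain ⟨t, -, ht⟩ := hp
  nlinarith [sq_nonneg (p.1 - t)]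

theorem slice_unitCircleUnion {y c : ℝ} (hc : c ^ 2 + y ^ 2 = 1) :
    (fun x => (x, y)) ⁻¹' unitCircleUnion F = (c +ᵥ F) ∪ (-c +ᵥ F) := by
  ext x
  simp only [unitCircleUnion, mem_preimage, mem_ofPred_eq, mem_union, mem_vadd_set, vadd_eq_add]
  constructor
  · rintro ⟨t, ht, hxt⟩
    have : (x - t - c) * (x - t + c) = 0 := by linear_combination hxt - hc
    rcases mul_eq_zero.1 this with h | h
    · exact Or.inl ⟨t, ht, by linarith⟩
    · exact Or.inr ⟨t, ht, by linarith⟩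
  · rintro (⟨t, ht, rfl⟩ | ⟨t, ht, rfl⟩) <;> exact ⟨t, ht, by linear_combination hc⟩

theorem volume_le_volume_slice_unitCircleUnion {y : ℝ} (hy : y ^ 2 ≤ 1) :
    volume F ≤ volume ((fun x => (x, y)) ⁻¹' unitCircleUnion F) := by
  have hc : √(1 - y ^ 2) ^ 2 + y ^ 2 = 1 := by rw [Real.sq_sqrt (by linarith)]; ring
  rw [slice_unitCircleUnion hc, ← measure_vadd volume √(1 - y ^ 2) F]
  exact measure_mono subset_union_left

theorem volume_unitCircleUnion_pos (hF : 0 < volume F) : 0 < volume (unitCircleUnion F) := by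
  have hslices : ∀ y ∈ Icc (-1 : ℝ) 1,
      volume F ≤ volume ((fun x => (x, y)) ⁻¹' unitCircleUnion F) := fun y hy =>
    volume_le_volume_slice_unitCircleUnion (by nlinarith [hy.1, hy.2])
  calc 0 < volume F * volume (Icc (-1 : ℝ) 1) := by simpa using hF
    _ = ∫⁻ _ in Icc (-1 : ℝ) 1, volume F := (setLIntegral_const _ _).symm
    _ ≤ ∫⁻ y in Icc (-1 : ℝ) 1, volume ((fun x => (x, y)) ⁻¹' unitCircleUnion F) :=
        setLIntegral_mono' measurableSet_Icc hslices
    _ ≤ ∫⁻ y, volume ((fun x => (x, y)) ⁻¹' unitCircleUnion F) := setLIntegral_le_lintegral _ _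
    _ ≤ volume (unitCircleUnion F) := by
        rw [Measure.volume_eq_prod]
        exact Measure.lintegral_measure_preimage_prodMk_le_prod _ _ _

theorem interior_slice_unitCircleUnion_eq_empty (hF : IsClosed F) (hFi : interior F = ∅)
    {y : ℝ} (hy : y ^ 2 ≤ 1) : interior ((fun x => (x, y)) ⁻¹' unitCircleUnion F) = ∅ := by
  have hc : √(1 - y ^ 2) ^ 2 + y ^ 2 = 1 := by rw [Real.sq_sqrt (by linarith)]; ring
  rw [slice_unitCircleUnion hc, interior_union_isClosed_of_interior_empty (hF.vadd _)
    (by rw [interior_vadd, hFi, vadd_set_empty]), interior_vadd, hFi, vadd_set_empty]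

theorem interior_unitCircleUnion_eq_empty (hF : IsClosed F) (hFi : interior F = ∅) :
    interior (unitCircleUnion F) = ∅ := by
  refine eq_empty_of_forall_notMem fun p hp => ?_
  have hslice : p.1 ∈ interior ((fun x => (x, p.2)) ⁻¹' unitCircleUnion F) :=
    interior_maximal (preimage_mono interior_subset)
      (isOpen_interior.preimage (Continuous.prodMk_left p.2)) hp
  rw [interior_slice_unitCircleUnion_eq_empty hF hFi
    (sq_le_one_of_mem_unitCircleUnion (interior_subset hp))] at hslice
  exact hslice

/-- There is a compact fat Cantor set `F ⊂ [0,1]` of positive measure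
and empty interior such that the union of unit circles centered on `F × {0}` has positive
two-dimensional Lebesgue measure but empty interior. -/
theorem stmt17 :
    ∃ F : Set ℝ, IsCompact F ∧ F ⊆ Icc 0 1 ∧ 0 < volume F ∧ interior F = ∅ ∧
      (0 < volume {y : ℝ × ℝ | ∃ t ∈ F, (y.1 - t) ^ 2 + y.2 ^ 2 = 1} ∧
        interior {y : ℝ × ℝ | ∃ t ∈ F, (y.1 - t) ^ 2 + y.2 ^ 2 = 1} = ∅) := by
  obtain ⟨F, hF01, hF, hFvol, hFi⟩ := exists_isCompact_subset_Icc_volume_pos_interior_eq_empty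
  exact ⟨F, hF, hF01, hFvol, hFi, volume_unitCircleUnion_pos hFvol,
    interior_unitCircleUnion_eq_empty hF.isClosed hFi⟩
end

section
/- Let μ be a compactly supported Borel probability measure on ℝ^d with μ(B(x,r)) ≤ C r^a for all x, r > 0 with a > 0, and let φ ∈ 𝒮(ℝ^d) (Schwartz class). Then for every j ≥ 0, 2^{jd} ∬ |φ(2^j(x-y))| dμ(x) dμ(y) ≤ C' 2^{j(d-a)}, with C' depending only on C, a, d, and finitely many Schwartz seminorms of φ. -/
open MeasureTheory Metric

def stmt19Ann {E : Type*} [NormedAddCommGroup E] (x : E) (c : ℝ) : ℕ → Set E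
  | 0 => ball x c⁻¹
  | (l+1) => ball x ((2:ℝ) ^ (l+1) / c) \ ball x ((2:ℝ) ^ l / c)

set_option maxHeartbeats 1000000 in
lemma stmt19_aux {E : Type*} [NormedAddCommGroup E] [NormedSpace ℝ E] [MeasurableSpace E]
    [OpensMeasurableSpace E]
    (μ : Measure E) (C0 a : ℝ) (hC0 : 0 ≤ C0) (ha : 0 < a)
    (hfrost : ∀ (x : E) (r : ℝ), 0 < r → μ (ball x r) ≤ ENNReal.ofReal (C0 * r ^ a))
    (f : E → ℝ) (hf : Continuous f)
    (k : ℕ) (hk : a < k) (B : ℝ)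
    (hB : ∀ z, |f z| ≤ B) (hBk : ∀ z, ‖z‖ ^ k * |f z| ≤ B)
    (c : ℝ) (hc : 1 ≤ c) (x : E) :
    ∫ y, |f (c • (x - y))| ∂μ ≤
      (B * C0 * (1 + (2:ℝ) ^ a * (1 - (2:ℝ) ^ a / 2 ^ k)⁻¹)) * (c ^ a)⁻¹ := by
  have hcpos : (0:ℝ) < c := lt_of_lt_of_le one_pos hc
  have hB0 : 0 ≤ B := le_trans (abs_nonneg _) (hB 0)
  set r : ℝ := (2:ℝ) ^ a / 2 ^ k with hr_def
  have h2a : (0:ℝ) < (2:ℝ) ^ a := Real.rpow_pos_of_pos two_pos a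
  have h2k : (0:ℝ) < (2:ℝ) ^ k := by positivity
  have hr0 : 0 ≤ r := by positivity
  have hr1 : r < 1 := by
    rw [hr_def, div_lt_one h2k]
    calc (2:ℝ) ^ a < (2:ℝ) ^ (k:ℝ) := Real.rpow_lt_rpow_left_iff one_lt_two |>.mpr hk
    _ = (2:ℝ) ^ k := Real.rpow_natCast 2 k
  have hrsub : 0 < 1 - r := by linarith
  have hca : (0:ℝ) < c ^ a := Real.rpow_pos_of_pos hcpos a
  -- geometric sum facts
  set K2 : ℝ := B * C0 * (2:ℝ) ^ a * (c ^ a)⁻¹ with hK2_def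
  have hK2 : 0 ≤ K2 := by positivity
  -- pow / rpow juggling
  have hpow : ∀ n : ℕ, ((2:ℝ) ^ n) ^ a = ((2:ℝ) ^ a) ^ n := fun n => by
    rw [← Real.rpow_natCast (2:ℝ) n, ← Real.rpow_natCast ((2:ℝ) ^ a) n,
      ← Real.rpow_mul (by norm_num), ← Real.rpow_mul (by norm_num), mul_comm]
  -- the dyadic sets
  set s : ℕ → Set E := stmt19Ann x c with hs_def
  have hcover : (⋃ l, s l) = Set.univ := by
    ext y
    simp only [Set.mem_iUnion, Set.mem_univ, iff_true]
    have hex : ∃ n : ℕ, ‖y - x‖ < (2:ℝ) ^ n / c := by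
      obtain ⟨n, hn⟩ := pow_unbounded_of_one_lt (‖y - x‖ * c) (one_lt_two (α := ℝ))
      exact ⟨n, (lt_div_iff₀ hcpos).mpr hn⟩
    classical
    obtain ⟨n, hn, hmin⟩ : ∃ n, ‖y - x‖ < (2:ℝ) ^ n / c ∧
        ∀ m, m < n → ¬ (‖y - x‖ < (2:ℝ) ^ m / c) :=
      ⟨Nat.find hex, Nat.find_spec hex, fun m hm => Nat.find_min hex hm⟩
    cases n with
    | zero =>
      refine ⟨0, ?_⟩
      show y ∈ stmt19Ann x c 0
      rw [stmt19Ann]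
      rw [mem_ball, dist_eq_norm]
      simpa [one_div] using hn
    | succ m =>
      refine ⟨m+1, ?_⟩
      have hm : ¬ (‖y - x‖ < (2:ℝ) ^ m / c) := hmin m (Nat.lt_succ_self m)
      show y ∈ stmt19Ann x c (m+1)
      rw [stmt19Ann]
      exact ⟨by rw [mem_ball, dist_eq_norm]; exact hn,
        by rw [mem_ball, dist_eq_norm]; exact hm⟩
  set g : E → ℝ := fun y => |f (c • (x - y))| with hg_def
  have hgc : Continuous g := (hf.comp (continuous_const.smul (continuous_const.sub continuous_id))).abs
  have hgnn : ∀ y, 0 ≤ g y := fun y => abs_nonneg _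
  -- lintegral bound
  have hmain : ∫⁻ y, ENNReal.ofReal (g y) ∂μ ≤
      ENNReal.ofReal (B * C0 * (c⁻¹) ^ a + K2 * (1 - r)⁻¹) := by
    have h1 : ∫⁻ y, ENNReal.ofReal (g y) ∂μ ≤ ∑' l, ∫⁻ y in s l, ENNReal.ofReal (g y) ∂μ := by
      rw [← setLIntegral_univ, ← hcover]
      exact lintegral_iUnion_le s _
    have h0 : ∫⁻ y in s 0, ENNReal.ofReal (g y) ∂μ ≤ ENNReal.ofReal (B * (C0 * (c⁻¹) ^ a)) := by
      rw [hs_def, stmt19Ann]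
      calc ∫⁻ y in ball x c⁻¹, ENNReal.ofReal (g y) ∂μ ≤ ∫⁻ _ in ball x c⁻¹, ENNReal.ofReal B ∂μ :=
            setLIntegral_mono measurable_const fun y _ => ENNReal.ofReal_le_ofReal (hB _)
        _ = ENNReal.ofReal B * μ (ball x c⁻¹) := setLIntegral_const _ _
        _ ≤ ENNReal.ofReal B * ENNReal.ofReal (C0 * (c⁻¹) ^ a) :=
            mul_le_mul_right (hfrost x c⁻¹ (by positivity)) _
        _ = ENNReal.ofReal (B * (C0 * (c⁻¹) ^ a)) := (ENNReal.ofReal_mul hB0).symm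
    have hl : ∀ l : ℕ, ∫⁻ y in s (l+1), ENNReal.ofReal (g y) ∂μ ≤ ENNReal.ofReal (K2 * r ^ l) := by
      intro l
      rw [hs_def, stmt19Ann]
      have hbound : ∀ y ∈ ball x ((2:ℝ) ^ (l+1) / c) \ ball x ((2:ℝ) ^ l / c),
          ENNReal.ofReal (g y) ≤ ENNReal.ofReal (B / (2 ^ k) ^ l) := by
        intro y hy
        apply ENNReal.ofReal_le_ofReal
        have hy2 : (2:ℝ) ^ l / c ≤ ‖y - x‖ := by
          have := hy.2
          rw [mem_ball, dist_eq_norm] at this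
          exact le_of_not_gt this
        have hz : ((2:ℝ) ^ l : ℝ) ≤ ‖c • (x - y)‖ := by
          rw [norm_smul, Real.norm_eq_abs, abs_of_pos hcpos, norm_sub_rev]
          calc (2:ℝ) ^ l = c * ((2:ℝ) ^ l / c) := by field_simp
          _ ≤ c * ‖y - x‖ := by
              exact mul_le_mul_of_nonneg_left hy2 hcpos.le
        have hzk : ((2:ℝ) ^ k) ^ l ≤ ‖c • (x - y)‖ ^ k := by
          rw [← pow_mul, mul_comm k l, pow_mul]
          exact pow_le_pow_left₀ (by positivity) hz k
        rw [le_div_iff₀ (by positivity)]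
        calc g y * (2 ^ k) ^ l = (2 ^ k) ^ l * g y := mul_comm _ _
        _ ≤ ‖c • (x - y)‖ ^ k * g y := mul_le_mul_of_nonneg_right hzk (hgnn y)
        _ ≤ B := hBk _
      calc ∫⁻ y in ball x ((2:ℝ) ^ (l+1) / c) \ ball x ((2:ℝ) ^ l / c), ENNReal.ofReal (g y) ∂μ
          ≤ ∫⁻ _ in ball x ((2:ℝ) ^ (l+1) / c) \ ball x ((2:ℝ) ^ l / c),
              ENNReal.ofReal (B / (2 ^ k) ^ l) ∂μ :=
            setLIntegral_mono measurable_const hbound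
        _ = ENNReal.ofReal (B / (2 ^ k) ^ l) * μ (ball x ((2:ℝ) ^ (l+1) / c) \ ball x ((2:ℝ) ^ l / c)) :=
            setLIntegral_const _ _
        _ ≤ ENNReal.ofReal (B / (2 ^ k) ^ l) * ENNReal.ofReal (C0 * ((2:ℝ) ^ (l+1) / c) ^ a) := by
            apply mul_le_mul_right
            exact le_trans (measure_mono Set.diff_subset)
              (hfrost x _ (by positivity))
        _ = ENNReal.ofReal (B / (2 ^ k) ^ l * (C0 * ((2:ℝ) ^ (l+1) / c) ^ a)) :=
            (ENNReal.ofReal_mul (by positivity)).symm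
        _ = ENNReal.ofReal (K2 * r ^ l) := by
            congr 1
            rw [Real.div_rpow (by positivity) hcpos.le, hpow (l+1), hK2_def, hr_def, div_pow]
            field_simp
            ring
    have hsum : (∑' l, ∫⁻ y in s l, ENNReal.ofReal (g y) ∂μ) ≤
        ENNReal.ofReal (B * (C0 * (c⁻¹) ^ a)) + ENNReal.ofReal (K2 * (1 - r)⁻¹) := by
      rw [tsum_eq_zero_add' ENNReal.summable]
      refine add_le_add h0 ?_
      calc (∑' l, ∫⁻ y in s (l+1), ENNReal.ofReal (g y) ∂μ) ≤ ∑' l, ENNReal.ofReal (K2 * r ^ l) :=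
            ENNReal.tsum_le_tsum hl
        _ = ENNReal.ofReal (∑' l, K2 * r ^ l) :=
            (ENNReal.ofReal_tsum_of_nonneg (fun l => by positivity)
              ((summable_geometric_of_lt_one hr0 hr1).mul_left _)).symm
        _ = ENNReal.ofReal (K2 * (1 - r)⁻¹) := by
            rw [tsum_mul_left, tsum_geometric_of_lt_one hr0 hr1]
    calc ∫⁻ y, ENNReal.ofReal (g y) ∂μ ≤ _ := h1
    _ ≤ _ := hsum
    _ = ENNReal.ofReal (B * C0 * (c⁻¹) ^ a + K2 * (1 - r)⁻¹) := by
        rw [← ENNReal.ofReal_add (by positivity) (by positivity)]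
        congr 1
        ring
  -- back to Bochner
  rw [integral_eq_lintegral_of_nonneg_ae (Filter.Eventually.of_forall hgnn)
    hgc.aestronglyMeasurable]
  apply ENNReal.toReal_le_of_le_ofReal (by positivity)
  refine le_trans hmain (ENNReal.ofReal_le_ofReal (le_of_eq ?_))
  rw [Real.inv_rpow hcpos.le, hK2_def]
  ring
/-- Dyadic Frostman estimate: if `μ` is a compactly supported Borel
probability measure on `ℝ^d` with `μ(B(x,r)) ≤ C r^a`, `a > 0`, and `φ` is Schwartz, then
`2^{jd} ∬ |φ(2^j(x-y))| dμ(x) dμ(y) ≤ C' 2^{j(d-a)}` for all `j ≥ 0`. -/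
theorem stmt19 (d : ℕ) (μ : Measure (EuclideanSpace ℝ (Fin d))) [IsProbabilityMeasure μ]
    (K : Set (EuclideanSpace ℝ (Fin d))) (hKcpt : IsCompact K) (hμK : μ Kᶜ = 0)
    (C a : ℝ) (ha : 0 < a)
    (hfrost : ∀ (x : EuclideanSpace ℝ (Fin d)) (r : ℝ), 0 < r →
      μ (ball x r) ≤ ENNReal.ofReal (C * r ^ a))
    (φ : SchwartzMap (EuclideanSpace ℝ (Fin d)) ℝ) :
    ∃ C' : ℝ, ∀ j : ℕ,
      (2 : ℝ) ^ (j * d) * ∫ x, ∫ y, |φ (((2 : ℝ) ^ j) • (x - y))| ∂μ ∂μ ≤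
        C' * (2 : ℝ) ^ ((j : ℝ) * ((d : ℝ) - a)) := by
  -- constants
  set C0 : ℝ := max C 0 with hC0_def
  have hC0 : 0 ≤ C0 := le_max_right _ _
  have hfrost' : ∀ (x : EuclideanSpace ℝ (Fin d)) (r : ℝ), 0 < r →
      μ (ball x r) ≤ ENNReal.ofReal (C0 * r ^ a) := fun x r hr =>
    le_trans (hfrost x r hr) (ENNReal.ofReal_le_ofReal
      (mul_le_mul_of_nonneg_right (le_max_left _ _) (Real.rpow_nonneg hr.le a)))
  set k : ℕ := ⌈a⌉₊ + 1 with hk_def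
  have hk : a < (k : ℝ) := by
    calc a ≤ (⌈a⌉₊ : ℝ) := Nat.le_ceil a
    _ < (k : ℝ) := by rw [hk_def]; push_cast; linarith
  obtain ⟨B0, hB0pos, hB0⟩ := φ.decay 0 0
  obtain ⟨B1, hB1pos, hB1⟩ := φ.decay k 0
  set B : ℝ := max B0 B1 with hB_def
  have hB : ∀ z, |φ z| ≤ B := fun z => by
    have := hB0 z
    rw [pow_zero, one_mul, norm_iteratedFDeriv_zero, Real.norm_eq_abs] at this
    exact this.trans (le_max_left _ _)
  have hBk : ∀ z, ‖z‖ ^ k * |φ z| ≤ B := fun z => by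
    have := hB1 z
    rw [norm_iteratedFDeriv_zero, Real.norm_eq_abs] at this
    exact this.trans (le_max_right _ _)
  set M : ℝ := B * C0 * (1 + (2:ℝ) ^ a * (1 - (2:ℝ) ^ a / 2 ^ k)⁻¹) with hM_def
  refine ⟨M, fun j => ?_⟩
  set c : ℝ := (2:ℝ) ^ j with hc_def
  have hc : 1 ≤ c := by rw [hc_def]; exact one_le_pow₀ one_le_two
  have hcpos : (0:ℝ) < c := lt_of_lt_of_le one_pos hc
  have hca : (0:ℝ) < c ^ a := Real.rpow_pos_of_pos hcpos a
  have hinner : ∀ x, ∫ y, |φ (c • (x - y))| ∂μ ≤ M * (c ^ a)⁻¹ := fun x =>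
    stmt19_aux μ C0 a hC0 ha hfrost' φ φ.continuous k hk B hB hBk c hc x
  have houter : ∫ x, ∫ y, |φ (c • (x - y))| ∂μ ∂μ ≤ M * (c ^ a)⁻¹ := by
    calc ∫ x, ∫ y, |φ (c • (x - y))| ∂μ ∂μ ≤ ∫ _, M * (c ^ a)⁻¹ ∂μ :=
        integral_mono_of_nonneg
          (Filter.Eventually.of_forall fun x => integral_nonneg fun y => abs_nonneg _)
          (integrable_const _)
          (Filter.Eventually.of_forall hinner)
    _ = M * (c ^ a)⁻¹ := by simp
  have hM0 : 0 ≤ M := by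
    have hB0' : 0 ≤ B := le_trans hB0pos.le (le_max_left _ _)
    have hr1 : (2:ℝ) ^ a / 2 ^ k < 1 := by
      rw [div_lt_one (by positivity)]
      calc (2:ℝ) ^ a < (2:ℝ) ^ (k:ℝ) := Real.rpow_lt_rpow_left_iff one_lt_two |>.mpr hk
      _ = (2:ℝ) ^ k := Real.rpow_natCast 2 k
    have : (0:ℝ) < 1 - (2:ℝ) ^ a / 2 ^ k := by linarith
    have h2a : (0:ℝ) < (2:ℝ) ^ a := Real.rpow_pos_of_pos two_pos a
    positivity
  calc (2 : ℝ) ^ (j * d) * ∫ x, ∫ y, |φ (c • (x - y))| ∂μ ∂μ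
      ≤ (2 : ℝ) ^ (j * d) * (M * (c ^ a)⁻¹) :=
        mul_le_mul_of_nonneg_left houter (by positivity)
    _ = M * (2 : ℝ) ^ ((j : ℝ) * ((d : ℝ) - a)) := by
        rw [hc_def, ← Real.rpow_natCast (2:ℝ) j, ← Real.rpow_natCast (2:ℝ) (j*d),
          ← Real.rpow_mul (by norm_num), ← Real.rpow_neg (by positivity)]
        rw [mul_left_comm, ← Real.rpow_add two_pos]
        congr 1
        push_cast
        ring
end
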